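/- arXiv:2107.03333 — 2 statements merged into one kernel-verified Lean document; each statement's English description precedes it below -/
import Mathlib

section
/- Let f: ℝᵐ → ℝ be twice differentiable with ∇²f(x) ≤ U·I for all x, let c ≥ 10, and suppose z ∈ ℝᵐ satisfies ‖z - ∇f(μ)‖₂ ≤ (4c)⁻¹‖∇f(μ)‖₂. Then f(μ - z/(cU)) ≤ f(μ) - (9/(10cU))‖∇f(μ)‖₂². -/
/-!
Integrating the Hessian bound twice along a segment gives the quadratic upper model
`f (x + v) ≤ f x + ⟪∇f x, v⟫ + U‖v‖²/2`. For the step `v = -z/(cU)`, the relative error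
`ε = (4c)⁻¹ ≤ 1/40` gives `⟪∇f μ, z⟫ ≥ (1 - ε)‖∇f μ‖²` and `‖z‖ ≤ (1 + ε)‖∇f μ‖`, so the decrease is
at least `(cU)⁻¹ (1 - ε - 2ε(1 + ε)²)‖∇f μ‖² ≥ (cU)⁻¹ · 9/10 · ‖∇f μ‖²`.
-/

open Set InnerProductSpace RealInnerProductSpace

theorem le_add_deriv_add_of_hasDerivAt_deriv_le {φ φ' φ'' : ℝ → ℝ} {C : ℝ}
    (hφ : ∀ t, HasDerivAt φ (φ' t) t) (hφ' : ∀ t, HasDerivAt φ' (φ'' t) t)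
    (hC : ∀ t, φ'' t ≤ C) : φ 1 ≤ φ 0 + φ' 0 + C / 2 := by
  have slope_le : ∀ t, 0 ≤ t → φ' t ≤ φ' 0 + C * t := by
    have hanti : Antitone fun t => φ' t - C * t :=
      antitone_of_hasDerivAt_nonpos (fun t => (hφ' t).sub ((hasDerivAt_id t).const_mul C))
        fun t => by simpa using hC t
    intro t ht
    simpa using hanti ht
  have hanti : AntitoneOn (fun t => φ t - φ' 0 * t - C * t ^ 2 / 2) (Ici 0) := by
    have hderiv : ∀ t, HasDerivAt (fun t => φ t - φ' 0 * t - C * t ^ 2 / 2)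
        (φ' t - φ' 0 - C * t) t := fun t =>
      (((hφ t).sub ((hasDerivAt_id t).const_mul _)).sub
        (((hasDerivAt_pow 2 t).const_mul C).div_const 2)).congr_deriv (by ring)
    refine antitoneOn_of_hasDerivWithinAt_nonpos (convex_Ici 0)
      (fun t _ => (hderiv t).continuousAt.continuousWithinAt)
      (fun t _ => (hderiv t).hasDerivWithinAt) fun t ht => ?_
    rw [interior_Ici] at ht
    linarith [slope_le t (le_of_lt ht)]
  have := hanti (mem_Ici.2 le_rfl) (mem_Ici.2 zero_le_one) zero_le_one
  norm_num at this
  linarith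

theorem le_add_fderiv_add_of_iteratedFDeriv_two_le {E : Type*} [NormedAddCommGroup E]
    [NormedSpace ℝ E] {f : E → ℝ} (hf : ContDiff ℝ 2 f) {x v : E} {K : ℝ}
    (hK : ∀ y, iteratedFDeriv ℝ 2 f y ![v, v] ≤ K) :
    f (x + v) ≤ f x + fderiv ℝ f x v + K / 2 := by
  have hline : ∀ t : ℝ, HasDerivAt (fun s : ℝ => x + s • v) v t := fun t => by
    simpa using ((hasDerivAt_id t).smul_const v).const_add x
  have hdf : Differentiable ℝ f := hf.differentiable (by norm_num)
  have hddf : Differentiable ℝ (fderiv ℝ f) :=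
    (hf.fderiv_right (m := 1) (by norm_num)).differentiable one_ne_zero
  have hφ (t : ℝ) : HasDerivAt (fun s => f (x + s • v)) (fderiv ℝ f (x + t • v) v) t :=
    (hdf _).hasFDerivAt.comp_hasDerivAt t (hline t)
  have hφ' (t : ℝ) : HasDerivAt (fun s => fderiv ℝ f (x + s • v) v)
      (fderiv ℝ (fderiv ℝ f) (x + t • v) v v) t := by
    simpa using ((hddf _).hasFDerivAt.comp_hasDerivAt t (hline t)).clm_apply (hasDerivAt_const t v)
  have hφ'' (t : ℝ) : fderiv ℝ (fderiv ℝ f) (x + t • v) v v ≤ K := by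
    simpa [iteratedFDeriv_two_apply] using hK (x + t • v)
  simpa using le_add_deriv_add_of_hasDerivAt_deriv_le hφ hφ' hφ''

theorem norm_le_of_norm_sub_le {E : Type*} [SeminormedAddCommGroup E] {g z : E} {ε : ℝ}
    (h : ‖z - g‖ ≤ ε * ‖g‖) : ‖z‖ ≤ (1 + ε) * ‖g‖ := by
  linarith [norm_le_norm_add_norm_sub' z g]

section
variable {F : Type*} [NormedAddCommGroup F] [InnerProductSpace ℝ F]

theorem apply_sub_smul_le_of_iteratedFDeriv_two_le [CompleteSpace F] {f : F → ℝ}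
    (hf : ContDiff ℝ 2 f) {U : ℝ} (hHess : ∀ x v, iteratedFDeriv ℝ 2 f x ![v, v] ≤ U * ‖v‖ ^ 2)
    (x z : F) (η : ℝ) :
    f (x - η • z) ≤ f x - η * (⟪gradient f x, z⟫ - U * η / 2 * ‖z‖ ^ 2) := by
  have := le_add_fderiv_add_of_iteratedFDeriv_two_le hf (x := x) (hHess · (-(η • z)))
  rw [← sub_eq_add_neg, ← inner_gradient_left, inner_neg_right, inner_smul_right, norm_neg,
    norm_smul, mul_pow, Real.norm_eq_abs, sq_abs] at this
  linarith

theorem real_inner_ge_of_norm_sub_le {g z : F} {ε : ℝ} (h : ‖z - g‖ ≤ ε * ‖g‖) :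
    (1 - ε) * ‖g‖ ^ 2 ≤ ⟪g, z⟫ := by
  have hcs : ⟪g, z - g⟫ ≥ -(‖g‖ * ‖z - g‖) := neg_le_of_abs_le (abs_real_inner_le_norm g _)
  have hsplit : ⟪g, z⟫ = ‖g‖ ^ 2 + ⟪g, z - g⟫ := by
    rw [inner_sub_right, real_inner_self_eq_norm_sq]; ring
  nlinarith [mul_le_mul_of_nonneg_left h (norm_nonneg g)]

theorem real_inner_sub_mul_norm_sq_ge_of_norm_sub_le {g z : F} {ε : ℝ} (hε₀ : 0 ≤ ε)
    (hε : ε ≤ 1 / 40) (h : ‖z - g‖ ≤ ε * ‖g‖) :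
    9 / 10 * ‖g‖ ^ 2 ≤ ⟪g, z⟫ - 2 * ε * ‖z‖ ^ 2 := by
  have hinner := real_inner_ge_of_norm_sub_le h
  have hnorm : ‖z‖ ^ 2 ≤ ((1 + ε) * ‖g‖) ^ 2 :=
    pow_le_pow_left₀ (norm_nonneg z) (norm_le_of_norm_sub_le h) 2
  have hpoly : ε + 2 * ε * (1 + ε) ^ 2 ≤ 1 / 10 := by nlinarith
  nlinarith [mul_le_mul_of_nonneg_left hnorm (by positivity : 0 ≤ 2 * ε),
    mul_le_mul_of_nonneg_right hpoly (sq_nonneg ‖g‖)]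

end

/-- approximate gradient descent progress. If `∇²f ≤ U·I`
everywhere, `c ≥ 10`, and `z` approximates `∇f(μ)` with relative error `(4c)⁻¹`,
then the step `μ - z/(cU)` decreases `f` by at least `(9/(10cU))‖∇f(μ)‖₂²`. -/
theorem approx_gradient_descent_progress {m : ℕ}
    (f : EuclideanSpace ℝ (Fin m) → ℝ) (hf : ContDiff ℝ 2 f)
    (U : ℝ) (hU : 0 < U)
    (hHess : ∀ x v, iteratedFDeriv ℝ 2 f x ![v, v] ≤ U * ‖v‖ ^ 2)
    (c : ℝ) (hc : 10 ≤ c)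
    (mu z : EuclideanSpace ℝ (Fin m))
    (hz : ‖z - gradient f mu‖ ≤ (4 * c)⁻¹ * ‖gradient f mu‖) :
    f (mu - (c * U)⁻¹ • z) ≤ f mu - (9 / (10 * c * U)) * ‖gradient f mu‖ ^ 2 := by
  have hc₀ : 0 < c := by linarith
  have hε : (4 * c)⁻¹ ≤ 1 / 40 := by
    rw [inv_le_comm₀ (by positivity) (by norm_num)]; linarith
  have hstep := apply_sub_smul_le_of_iteratedFDeriv_two_le hf hHess mu z (c * U)⁻¹
  have hprogress := real_inner_sub_mul_norm_sq_ge_of_norm_sub_le (by positivity) hε hz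
  have hcoeff : U * (c * U)⁻¹ / 2 = 2 * (4 * c)⁻¹ := by field_simp; ring
  rw [hcoeff] at hstep
  calc f (mu - (c * U)⁻¹ • z)
      ≤ f mu - (c * U)⁻¹ * (⟪gradient f mu, z⟫ - 2 * (4 * c)⁻¹ * ‖z‖ ^ 2) := hstep
    _ ≤ f mu - (c * U)⁻¹ * (9 / 10 * ‖gradient f mu‖ ^ 2) := by gcongr
    _ = f mu - (9 / (10 * c * U)) * ‖gradient f mu‖ ^ 2 := by field_simp
end

section
/- Let f: ℝᵐ → ℝ be twice differentiable with L·I ≤ ∇²f(x) ≤ U·I for all x (0 < L ≤ U), with minimizer λ. Suppose z satisfies ‖z - ∇f(μ)‖₂ ≤ (4c)⁻¹‖∇f(μ)‖₂ for some c ≥ 10. Then f(μ - z/(cU)) - f(λ) ≤ (1 - 18L/(10cU)) (f(μ) - f(λ)). -/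
/-!
Along every line the second derivative of `f` lies between `L‖v‖²` and `U‖v‖²`, so `f` is
squeezed between two quadratics around any point. The upper quadratic, evaluated at the step
`μ - z/(cU)` with `z` close to `∇f(μ)`, shows that the step decreases `f` by at least
`9‖∇f(μ)‖²/(10cU)`; minimizing the lower quadratic gives `f(μ) - f(λ) ≤ ‖∇f(μ)‖²/(2L)`.
Together these give the contraction factor `1 - 18L/(10cU)`.
-/

open scoped RealInnerProductSpace Gradient

theorem le_add_mul_add_sq_of_deriv2_le {g g' g'' : ℝ → ℝ} {K t : ℝ}
    (hg : ∀ s, HasDerivAt g (g' s) s) (hg' : ∀ s, HasDerivAt g' (g'' s) s)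
    (hK : ∀ s, g'' s ≤ K) (ht : 0 ≤ t) :
    g t ≤ g 0 + g' 0 * t + K / 2 * t ^ 2 := by
  set φ : ℝ → ℝ := fun s => g s - g 0 - g' 0 * s - K / 2 * s ^ 2
  set ψ : ℝ → ℝ := fun s => g' s - g' 0 - K * s
  have hφ : ∀ s, HasDerivAt φ (ψ s) s := fun s => by
    refine ((((hg s).sub_const (g 0)).sub ((hasDerivAt_id s).const_mul (g' 0))).sub
      ((hasDerivAt_pow 2 s).const_mul (K / 2))).congr_deriv ?_
    simp only [ψ]; ring
  have hψ : Antitone ψ := antitone_of_hasDerivAt_nonpos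
    (fun s => (((hg' s).sub_const (g' 0)).sub ((hasDerivAt_id s).const_mul K)))
    (fun s => by simp only [mul_one, Pi.zero_apply, sub_nonpos]; exact hK s)
  have hφ_anti : AntitoneOn φ (Set.Ici 0) := by
    refine antitoneOn_of_hasDerivWithinAt_nonpos (convex_Ici 0)
      (fun s _ => (hφ s).continuousAt.continuousWithinAt) (fun s _ => (hφ s).hasDerivWithinAt)
      (fun s hs => ?_)
    rw [interior_Ici] at hs
    simpa [ψ] using hψ hs.le
  have := hφ_anti Set.self_mem_Ici ht ht
  simp only [φ] at this
  linarith

section Taylor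

variable {F : Type*} [NormedAddCommGroup F] [NormedSpace ℝ F] {f : F → ℝ}

theorem le_add_fderiv_add_of_iteratedFDeriv_two_le_s7 (hf : ContDiff ℝ 2 f) {U : ℝ}
    (hH : ∀ x v, iteratedFDeriv ℝ 2 f x ![v, v] ≤ U * ‖v‖ ^ 2) (x v : F) :
    f (x + v) ≤ f x + fderiv ℝ f x v + U / 2 * ‖v‖ ^ 2 := by
  have hline : ∀ t : ℝ, HasDerivAt (fun t : ℝ => x + t • v) v t := fun t => by
    simpa using ((hasDerivAt_id t).smul_const v).const_add x
  have hf' : Differentiable ℝ (fderiv ℝ f) :=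
    (hf.fderiv_right (m := 1) (by norm_num)).differentiable (by norm_num)
  have h := le_add_mul_add_sq_of_deriv2_le (g := fun t : ℝ => f (x + t • v))
    (g' := fun t => fderiv ℝ f (x + t • v) v)
    (g'' := fun t => fderiv ℝ (fderiv ℝ f) (x + t • v) v v) (K := U * ‖v‖ ^ 2)
    (fun t => ((hf.differentiable (by norm_num) _).hasFDerivAt.comp_hasDerivAt t (hline t)))
    (fun t => ((ContinuousLinearMap.apply ℝ ℝ v).hasFDerivAt.comp _
      (hf' _).hasFDerivAt).comp_hasDerivAt t (hline t))
    (fun t => by simpa [iteratedFDeriv_two_apply] using hH (x + t • v) v) zero_le_one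
  simp only [one_smul, zero_smul, add_zero, one_pow, mul_one] at h
  linarith

theorem add_fderiv_add_le_of_le_iteratedFDeriv_two (hf : ContDiff ℝ 2 f) {L : ℝ}
    (hH : ∀ x v, L * ‖v‖ ^ 2 ≤ iteratedFDeriv ℝ 2 f x ![v, v]) (x v : F) :
    f x + fderiv ℝ f x v + L / 2 * ‖v‖ ^ 2 ≤ f (x + v) := by
  have h := le_add_fderiv_add_of_iteratedFDeriv_two_le_s7 (f := -f) hf.neg (U := -L)
    (fun x v => by
      simp only [iteratedFDeriv_neg_apply, neg_apply]
      linarith [hH x v]) x v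
  simp only [fderiv_neg, neg_apply, Pi.neg_apply] at h
  linarith

end Taylor

section Gradient

variable {E : Type*} [NormedAddCommGroup E] [InnerProductSpace ℝ E] [CompleteSpace E]
  {f : E → ℝ}

theorem sub_le_norm_gradient_sq_div (hf : ContDiff ℝ 2 f) {L : ℝ} (hL : 0 < L)
    (hH : ∀ x v, L * ‖v‖ ^ 2 ≤ iteratedFDeriv ℝ 2 f x ![v, v]) (x y : E) :
    f x - f y ≤ ‖∇ f x‖ ^ 2 / (2 * L) := by
  have hy := add_fderiv_add_le_of_le_iteratedFDeriv_two hf hH x (y - x)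
  rw [add_sub_cancel, ← inner_gradient_left] at hy
  -- the quadratic `w ↦ ⟪∇f x, w⟫ + L/2 ‖w‖²` is minimal at `w = -∇f x / L`
  have hsq : 0 ≤ ‖∇ f x + L • (y - x)‖ ^ 2 := sq_nonneg _
  rw [norm_add_sq_real, inner_smul_right, norm_smul, Real.norm_of_nonneg hL.le, mul_pow] at hsq
  rw [le_div_iff₀ (by positivity)]
  nlinarith

theorem le_sub_of_norm_sub_gradient_le (hf : ContDiff ℝ 2 f) {U : ℝ} (hU : 0 < U)
    (hH : ∀ x v, iteratedFDeriv ℝ 2 f x ![v, v] ≤ U * ‖v‖ ^ 2) {c : ℝ} (hc : 10 ≤ c)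
    (x z : E) (hz : ‖z - ∇ f x‖ ≤ (4 * c)⁻¹ * ‖∇ f x‖) :
    f (x - (c * U)⁻¹ • z) ≤ f x - 9 / (10 * c * U) * ‖∇ f x‖ ^ 2 := by
  set g := ∇ f x
  set s := (c * U)⁻¹ with hs
  set q := (4 * c)⁻¹ with hq
  have hs0 : 0 < s := by positivity
  have hq0 : 0 < q := by positivity
  have hq40 : q ≤ 1 / 40 := by
    rw [hq, inv_le_comm₀ (by positivity) (by norm_num)]
    linarith
  have hinner : (1 - q) * ‖g‖ ^ 2 ≤ ⟪g, z⟫ := by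
    have h := neg_le_of_abs_le (abs_real_inner_le_norm g (z - g))
    rw [inner_sub_right, real_inner_self_eq_norm_sq] at h
    nlinarith [norm_nonneg g]
  have hnorm : ‖z‖ ≤ (1 + q) * ‖g‖ := by
    linarith [norm_le_norm_add_norm_sub' z g]
  have hstep := le_add_fderiv_add_of_iteratedFDeriv_two_le_s7 hf hH x (-(s • z))
  rw [← sub_eq_add_neg, ← inner_gradient_left, inner_neg_right, real_inner_smul_right,
    norm_neg, norm_smul, Real.norm_of_nonneg hs0.le] at hstep
  have hcoef : U / 2 * s ^ 2 = 2 * q * s := by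
    rw [hs, hq]; field_simp; ring
  calc f (x - s • z) ≤ f x + -(s * ⟪g, z⟫) + U / 2 * (s * ‖z‖) ^ 2 := hstep
    _ = f x - s * ⟪g, z⟫ + 2 * q * s * ‖z‖ ^ 2 := by rw [← hcoef]; ring
    _ ≤ f x - s * ((1 - q) * ‖g‖ ^ 2) + 2 * q * s * ((1 + q) * ‖g‖) ^ 2 := by gcongr
    _ = f x - s * ‖g‖ ^ 2 * (1 - q - 2 * q * (1 + q) ^ 2) := by ring
    _ ≤ f x - s * ‖g‖ ^ 2 * (9 / 10) := by gcongr; nlinarith [hq0, hq40]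
    _ = f x - 9 / (10 * c * U) * ‖g‖ ^ 2 := by rw [hs]; field_simp

end Gradient

theorem approx_gradient_descent_contraction_general {m : ℕ}
    (f : EuclideanSpace ℝ (Fin m) → ℝ) (hf : ContDiff ℝ 2 f)
    (L U : ℝ) (hL : 0 < L) (hLU : L ≤ U)
    (hHess : ∀ x v, L * ‖v‖ ^ 2 ≤ iteratedFDeriv ℝ 2 f x ![v, v] ∧
      iteratedFDeriv ℝ 2 f x ![v, v] ≤ U * ‖v‖ ^ 2)
    (lam : EuclideanSpace ℝ (Fin m))
    (c : ℝ) (hc : 10 ≤ c)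
    (mu z : EuclideanSpace ℝ (Fin m))
    (hz : ‖z - gradient f mu‖ ≤ (4 * c)⁻¹ * ‖gradient f mu‖) :
    f (mu - (c * U)⁻¹ • z) - f lam ≤ (1 - 18 * L / (10 * c * U)) * (f mu - f lam) := by
  have hU : 0 < U := hL.trans_le hLU
  have hstep := le_sub_of_norm_sub_gradient_le hf hU (fun x v => (hHess x v).2) hc mu z hz
  have hgap := sub_le_norm_gradient_sq_div hf hL (fun x v => (hHess x v).1) mu lam
  rw [le_div_iff₀ (by positivity)] at hgap
  calc f (mu - (c * U)⁻¹ • z) - f lam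
      ≤ f mu - f lam - 9 / (10 * c * U) * ‖∇ f mu‖ ^ 2 := by linarith
    _ ≤ f mu - f lam - 9 / (10 * c * U) * ((f mu - f lam) * (2 * L)) := by gcongr
    _ = (1 - 18 * L / (10 * c * U)) * (f mu - f lam) := by ring

/-- exponential convergence of approximate gradient descent. If
`L·I ≤ ∇²f ≤ U·I` (`0 < L ≤ U`), `λ` minimizes `f`, `c ≥ 10`, and `z` approximates
`∇f(μ)` with relative error `(4c)⁻¹`, then
`f(μ - z/(cU)) - f(λ) ≤ (1 - 18L/(10cU)) (f(μ) - f(λ))`. -/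
theorem approx_gradient_descent_contraction {m : ℕ}
    (f : EuclideanSpace ℝ (Fin m) → ℝ) (hf : ContDiff ℝ 2 f)
    (L U : ℝ) (hL : 0 < L) (hLU : L ≤ U)
    (hHess : ∀ x v, L * ‖v‖ ^ 2 ≤ iteratedFDeriv ℝ 2 f x ![v, v] ∧
      iteratedFDeriv ℝ 2 f x ![v, v] ≤ U * ‖v‖ ^ 2)
    (lam : EuclideanSpace ℝ (Fin m)) (hmin : ∀ x, f lam ≤ f x)
    (c : ℝ) (hc : 10 ≤ c)
    (mu z : EuclideanSpace ℝ (Fin m))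
    (hz : ‖z - gradient f mu‖ ≤ (4 * c)⁻¹ * ‖gradient f mu‖) :
    f (mu - (c * U)⁻¹ • z) - f lam ≤ (1 - 18 * L / (10 * c * U)) * (f mu - f lam) :=
  approx_gradient_descent_contraction_general f hf L U hL hLU hHess lam c hc mu z hz
end
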